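/- For integers i ≥ 3 and k ≥ i + 3, the 2-Frobenius number of (F_i, F_{i+2}, F_{i+k}) equals (3·F_i − 1)·F_{i+2} − F_i. -/
import Mathlib

private lemma finsol (a b c : ℕ) (ha : 0 < a) (hb : 0 < b) (hc : 0 < c) (n : ℤ) :
    Finite {v : ℕ × ℕ × ℕ // (v.1 : ℤ) * a + v.2.1 * b + v.2.2 * c = n} := by
  have h : {v : ℕ × ℕ × ℕ | (v.1 : ℤ) * a + v.2.1 * b + v.2.2 * c = n}.Finite := by
    apply (Set.finite_Iic (n.toNat, n.toNat, n.toNat)).subset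
    rintro ⟨x, y, z⟩ hxyz
    simp only [Set.mem_setOf_eq] at hxyz
    have ha' : (1:ℤ) ≤ a := by exact_mod_cast ha
    have hb' : (1:ℤ) ≤ b := by exact_mod_cast hb
    have hc' : (1:ℤ) ≤ c := by exact_mod_cast hc
    have p1 : (0:ℤ) ≤ x := Int.natCast_nonneg x
    have p2 : (0:ℤ) ≤ y := Int.natCast_nonneg y
    have p3 : (0:ℤ) ≤ z := Int.natCast_nonneg z
    have hx : (x : ℤ) ≤ n := by nlinarith
    have hy : (y : ℤ) ≤ n := by nlinarith
    have hz : (z : ℤ) ≤ n := by nlinarith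
    simp only [Set.mem_Iic, Prod.mk_le_mk]
    omega
  exact h.to_subtype

private lemma mem_lemma (a b c : ℕ) (ha : 1 ≤ a) (hb : 1 ≤ b) (hab : Nat.Coprime a b)
    (hc : 3 * (a:ℤ) * b - a - b < c) :
    Nat.card {v : ℕ × ℕ × ℕ // (v.1 : ℤ) * a + v.2.1 * b + v.2.2 * c = 3 * (a:ℤ) * b - a - b}
      ≤ 2 := by
  have ha' : (1:ℤ) ≤ a := by exact_mod_cast ha
  have hb' : (1:ℤ) ≤ b := by exact_mod_cast hb
  have hchar : ∀ v : {v : ℕ × ℕ × ℕ //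
      (v.1 : ℤ) * a + v.2.1 * b + v.2.2 * c = 3 * (a:ℤ) * b - a - b},
      (v.1.1 = b - 1 ∧ v.1.2.1 = 2*a - 1 ∧ v.1.2.2 = 0) ∨
      (v.1.1 = 2*b - 1 ∧ v.1.2.1 = a - 1 ∧ v.1.2.2 = 0) := by
    rintro ⟨⟨x, y, z⟩, hv⟩
    simp only at hv ⊢
    -- z = 0
    have hz : z = 0 := by
      rcases Nat.eq_zero_or_pos z with h | h
      · exact h
      exfalso
      have : (c:ℤ) ≤ (z:ℤ) * c := le_mul_of_one_le_left (by positivity) (by exact_mod_cast h)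
      nlinarith [Int.natCast_nonneg x, Int.natCast_nonneg y]
    subst hz
    have hv' : (a:ℤ) * (x + 1) + b * (y + 1) = 3 * a * b := by push_cast at hv ⊢; ring_nf; ring_nf at hv; linarith
    have hcop : IsCoprime (b:ℤ) (a:ℤ) := by
      rw [Int.isCoprime_iff_gcd_eq_one]
      simpa [Int.gcd_natCast_natCast, Nat.coprime_comm] using hab.symm
    have hdvd : (b:ℤ) ∣ (a:ℤ) * (x + 1) := ⟨3 * a - (y + 1), by linarith⟩
    obtain ⟨t, ht⟩ := hcop.dvd_of_dvd_mul_left hdvd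
    rw [ht] at hv'
    have ht1 : 1 ≤ t := by
      by_contra h
      push_neg at h
      have h0 : (b:ℤ) * t ≤ 0 :=
        mul_nonpos_of_nonneg_of_nonpos (by positivity) (by omega)
      have : (0:ℤ) ≤ x := Int.natCast_nonneg x
      linarith
    have heq : (a:ℤ) * t + (y + 1) = 3 * a := by
      have hb2 : (b:ℤ) * ((a:ℤ) * t + (y+1)) = b * (3 * a) := by linear_combination hv'
      exact mul_left_cancel₀ (by positivity) hb2
    have ht2 : t ≤ 2 := by
      by_contra h
      push_neg at h
      have : (a:ℤ) * 3 ≤ a * t := mul_le_mul_of_nonneg_left (by omega) (by positivity)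
      have : (0:ℤ) ≤ y := Int.natCast_nonneg y
      linarith
    interval_cases t
    · left; refine ⟨?_, ?_, rfl⟩ <;> omega
    · right; refine ⟨?_, ?_, rfl⟩ <;> omega
  have hinj : Function.Injective (fun v : {v : ℕ × ℕ × ℕ //
      (v.1 : ℤ) * a + v.2.1 * b + v.2.2 * c = 3 * (a:ℤ) * b - a - b} =>
      (if v.1.1 = b - 1 then 0 else 1 : Fin 2)) := by
    intro v w hvw
    simp only at hvw
    rcases hchar v with ⟨h1, h2, h3⟩ | ⟨h1, h2, h3⟩ <;>
      rcases hchar w with ⟨g1, g2, g3⟩ | ⟨g1, g2, g3⟩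
    · exact Subtype.ext (Prod.ext (h1.trans g1.symm) (Prod.ext (h2.trans g2.symm) (h3.trans g3.symm)))
    · rw [if_pos h1, if_neg (by omega)] at hvw; exact absurd hvw (by decide)
    · rw [if_neg (by omega), if_pos g1] at hvw; exact absurd hvw (by decide)
    · exact Subtype.ext (Prod.ext (h1.trans g1.symm) (Prod.ext (h2.trans g2.symm) (h3.trans g3.symm)))
  calc Nat.card _ ≤ Nat.card (Fin 2) := Nat.card_le_card_of_injective _ hinj
    _ = 2 := by simp

private lemma bound_lemma (a b c : ℕ) (ha : 1 ≤ a) (hb : 1 ≤ b) (hc : 1 ≤ c)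
    (hab : Nat.Coprime a b) (n : ℤ) (hn : 3 * (a:ℤ) * b - a - b < n) :
    3 ≤ Nat.card {v : ℕ × ℕ × ℕ // (v.1 : ℤ) * a + v.2.1 * b + v.2.2 * c = n} := by
  have ha' : (1:ℤ) ≤ a := by exact_mod_cast ha
  have hb' : (1:ℤ) ≤ b := by exact_mod_cast hb
  haveI := finsol a b c ha hb hc n
  have hcop : IsCoprime (a:ℤ) (b:ℤ) := by
    rw [Int.isCoprime_iff_gcd_eq_one]; simpa [Int.gcd_natCast_natCast] using hab
  obtain ⟨u, v, huv⟩ := hcop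
  set x₀ : ℤ := (u * n) % b with hx₀def
  have hx₀0 : 0 ≤ x₀ := Int.emod_nonneg _ (by positivity)
  have hx₀b : x₀ < b := Int.emod_lt_of_pos _ (by positivity)
  set m : ℤ := v * n + a * ((u * n) / b) with hmdef
  have hm : n - a * x₀ = b * m := by
    rw [hx₀def, hmdef, Int.emod_def]
    linear_combination (-n) * huv
  have hm2a : 2 * (a:ℤ) ≤ m := by
    have h1 : (b:ℤ) * (2 * a - 1) < b * m := by nlinarith
    have := lt_of_mul_lt_mul_left h1 (by positivity : (0:ℤ) ≤ b)
    omega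
  set X : ℕ := x₀.toNat with hXdef
  set M : ℕ := m.toNat with hMdef
  have hX : (X:ℤ) = x₀ := Int.toNat_of_nonneg hx₀0
  have hM : (M:ℤ) = m := Int.toNat_of_nonneg (by linarith)
  have hMa : 2 * a ≤ M := by omega
  have key : ∀ j : ℕ, j ≤ 2 →
      ((X + j * b : ℕ) : ℤ) * a + ((M - j * a : ℕ) : ℤ) * b + ((0:ℕ):ℤ) * c = n := by
    intro j hj
    have hja : j * a ≤ M := le_trans (by nlinarith) hMa
    push_cast [hja]
    rw [hX, hM]
    linear_combination -hm
  let e : Fin 3 → {v : ℕ × ℕ × ℕ // (v.1 : ℤ) * a + v.2.1 * b + v.2.2 * c = n} :=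
    fun j => ⟨(X + j * b, M - j * a, 0), key j (by omega)⟩
  have hinj : Function.Injective e := by
    intro p q hpq
    have h1 : X + (p:ℕ) * b = X + (q:ℕ) * b := congrArg (fun w => w.1.1) hpq
    have : (p:ℕ) = (q:ℕ) := by
      have := Nat.eq_of_mul_eq_mul_right hb (by omega : (p:ℕ) * b = (q:ℕ) * b)
      exact this
    exact Fin.ext this
  calc (3:ℕ) = Nat.card (Fin 3) := by simp
    _ ≤ _ := Nat.card_le_card_of_injective e hinj

private lemma fib_cop (i : ℕ) : Nat.Coprime (Nat.fib i) (Nat.fib (i + 2)) := by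
  rw [Nat.Coprime, ← Nat.fib_gcd]
  have h : Nat.gcd i (i + 2) = Nat.gcd i 2 := by
    rw [show i + 2 = 2 + i by ring]
    exact Nat.gcd_add_self_right i 2
  rw [h]
  have h2 : Nat.gcd i 2 ∣ 2 := Nat.gcd_dvd_right i 2
  rcases (Nat.dvd_prime Nat.prime_two).mp h2 with h | h <;> simp [h]

private lemma fib_big (i k : ℕ) (hi : 3 ≤ i) (hk : i + 3 ≤ k) :
    3 * Nat.fib i * Nat.fib (i + 2) ≤ Nat.fib (i + k) := by
  obtain ⟨j, rfl⟩ : ∃ j, i = j + 3 := ⟨i - 3, by omega⟩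
  have h1 : Nat.fib (j + 4 + (j + 4) + 1) ≤ Nat.fib (j + 3 + k) := Nat.fib_mono (by omega)
  rw [Nat.fib_add] at h1
  have e1 : Nat.fib (j + 4) = Nat.fib (j + 2) + Nat.fib (j + 3) := Nat.fib_add_two
  have e2 : Nat.fib (j + 3) = Nat.fib (j + 1) + Nat.fib (j + 2) := Nat.fib_add_two
  have e3 : Nat.fib (j + 5) = Nat.fib (j + 3) + Nat.fib (j + 4) := Nat.fib_add_two
  set u := Nat.fib (j + 1) with hu
  set v := Nat.fib (j + 2) with hv
  have mono : u ≤ v := Nat.fib_mono (by omega)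
  have f3 : Nat.fib (j + 3) = u + v := e2
  have f4 : Nat.fib (j + 4) = u + 2 * v := by omega
  have f5 : Nat.fib (j + 5) = 2 * u + 3 * v := by omega
  have main : 3 * (u + v) * (2 * u + 3 * v) ≤
      (u + 2 * v) * (u + 2 * v) + (2 * u + 3 * v) * (2 * u + 3 * v) := by nlinarith
  calc 3 * Nat.fib (j + 3) * Nat.fib (j + 3 + 2)
      = 3 * (u + v) * (2 * u + 3 * v) := by rw [show j + 3 + 2 = j + 5 from rfl, f3, f5]
    _ ≤ (u + 2 * v) * (u + 2 * v) + (2 * u + 3 * v) * (2 * u + 3 * v) := main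
    _ = Nat.fib (j + 4) * Nat.fib (j + 4) + Nat.fib (j + 4 + 1) * Nat.fib (j + 4 + 1) := by
        rw [show j + 4 + 1 = j + 5 from rfl, f4, f5]
    _ ≤ Nat.fib (j + 3 + k) := h1

/-- Number of representations of `n` as a nonnegative integer combination of `a`, `b`, `c`. -/
noncomputable def repCount (a b c : ℕ) (n : ℤ) : ℕ :=
  Nat.card {v : ℕ × ℕ × ℕ // (v.1 : ℤ) * a + v.2.1 * b + v.2.2 * c = n}

/-- `g` is the `p`-Frobenius number of `a, b, c`: the largest integer with at most `p`
representations. -/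
def IsPFrob (p a b c : ℕ) (g : ℤ) : Prop :=
  IsGreatest {n : ℤ | repCount a b c n ≤ p} g

/-- Lucas numbers. -/
def lucas : ℕ → ℕ
  | 0 => 2
  | 1 => 1
  | n + 2 => lucas n + lucas (n + 1)

theorem stmt8 (i k : ℕ) (hi : 3 ≤ i) (hk : i + 3 ≤ k) :
    letI F := Nat.fib
    IsPFrob 2 (F i) (F (i + 2)) (F (i + k))
      ((3 * (F i : ℤ) - 1) * F (i + 2) - F i) := by
  show IsPFrob 2 (Nat.fib i) (Nat.fib (i + 2)) (Nat.fib (i + k))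
      ((3 * (Nat.fib i : ℤ) - 1) * Nat.fib (i + 2) - Nat.fib i)
  set a := Nat.fib i with hadef
  set b := Nat.fib (i + 2) with hbdef
  set c := Nat.fib (i + k) with hcdef
  have ha : 1 ≤ a := Nat.fib_pos.mpr (by omega)
  have hb : 1 ≤ b := Nat.fib_pos.mpr (by omega)
  have hc : 1 ≤ c := Nat.fib_pos.mpr (by omega)
  have ha' : (1:ℤ) ≤ a := by exact_mod_cast ha
  have hb' : (1:ℤ) ≤ b := by exact_mod_cast hb
  have hab : Nat.Coprime a b := fib_cop i
  have hbig : ((3 * a * b : ℕ) : ℤ) ≤ (c : ℤ) := by exact_mod_cast fib_big i k hi hk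
  have hcZ : 3 * (a:ℤ) * b - a - b < c := by push_cast at hbig; linarith
  have hg : (3 * (a:ℤ) - 1) * b - a = 3 * (a:ℤ) * b - a - b := by ring
  constructor
  · show repCount a b c _ ≤ 2
    rw [hg]
    exact mem_lemma a b c ha hb hab hcZ
  · intro n hn
    have hn' : repCount a b c n ≤ 2 := hn
    by_contra h
    push_neg at h
    rw [hg] at h
    have h3 := bound_lemma a b c ha hb hc hab n h
    rw [repCount] at hn'
    omega
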